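/- Let n ≥ 2. For every γ > 0 and every positive integer T, the proportion of a ∈ G(T) satisfying (a₁+⋯+aₙ)^{1+1/(n-1)}/(a₁⋯aₙ)^{1/(n-1)} ≥ γ is at most c(n)·γ^{-(n-1)²/n} for a constant c(n) depending only on n. -/

import Mathlib

/-!
Write `S = ∑ aᵢ` and `P = ∏ aᵢ`. The inequality `γ ≤ S ^ (n/(n-1)) / P ^ (1/(n-1))` together with
`S ≤ nT` forces `P ≤ M := (nT)ⁿ / γⁿ⁻¹`. By Rankin's trick, the number of `a ∈ [1, T]ⁿ` with
`P ≤ M` is at most `∑ₐ (M / P) ^ s = M ^ s (∑_{k ≤ T} k ^ (-s))ⁿ`, and for `s = 1 - 1/n` the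
one-dimensional sum telescopes against `k ↦ n k ^ (1/n)`, so it is at most `n T ^ (1/n)`. This
bounds the count by `n²ⁿ⁻¹ Tⁿ γ ^ (-(n-1)²/n)`. On the other side, a sieve over the common
divisors `d ≥ 2` shows that at least `Tⁿ / 12` of the `Tⁿ` vectors are primitive, because
`∑_{d ≥ 2} d⁻ⁿ ≤ ∑_{d ≥ 2} d⁻² < 11/12`.
-/

/-- The set of primitive vectors in `{1,...,T}^n`. -/
def GSet (n T : ℕ) : Finset (Fin n → ℕ) :=
  (Fintype.piFinset fun _ : Fin n => Finset.Icc 1 T).filter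
    (fun a => Finset.univ.gcd a = 1)

open Finset Real

lemma mul_rpow_sub_one_le_rpow_sub_rpow {p x : ℝ} (hp0 : 0 ≤ p) (hp1 : p ≤ 1) (hx : 1 ≤ x) :
    p * x ^ (p - 1) ≤ x ^ p - (x - 1) ^ p := by
  have hx0 : 0 < x := by linarith
  have hinv : x⁻¹ ≤ 1 := inv_le_one_of_one_le₀ hx
  have hbernoulli : (1 + -x⁻¹) ^ p ≤ 1 + p * -x⁻¹ :=
    rpow_one_add_le_one_add_mul_self (by linarith) hp0 hp1
  have : (x - 1) ^ p ≤ x ^ p - p * x ^ (p - 1) :=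
    calc (x - 1) ^ p = x ^ p * (1 + -x⁻¹) ^ p := by
          rw [← mul_rpow hx0.le (by linarith), mul_add, mul_neg, mul_inv_cancel₀ hx0.ne', mul_one,
            ← sub_eq_add_neg]
      _ ≤ x ^ p * (1 + p * -x⁻¹) := by gcongr
      _ = x ^ p - p * x ^ (p - 1) := by rw [rpow_sub_one hx0.ne']; ring
  linarith

lemma mul_sum_Icc_rpow_sub_one_le {p : ℝ} (hp0 : 0 ≤ p) (hp1 : p ≤ 1) (T : ℕ) :
    p * ∑ k ∈ Icc 1 T, (k : ℝ) ^ (p - 1) ≤ (T : ℝ) ^ p := by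
  induction T with
  | zero => simpa using rpow_nonneg le_rfl p
  | succ T ih =>
    have hstep := mul_rpow_sub_one_le_rpow_sub_rpow hp0 hp1 (x := T + 1) (by simp)
    rw [sum_Icc_succ_top (by omega), mul_add]
    push_cast
    rw [add_sub_cancel_right] at hstep
    linarith

lemma card_filter_prod_le_le_rpow_mul (n T : ℕ) {M s : ℝ} (hM : 0 ≤ M) (hs : 0 ≤ s) :
    (#{a ∈ Fintype.piFinset fun _ : Fin n => Icc 1 T | ∏ i, (a i : ℝ) ≤ M} : ℝ) ≤
      M ^ s * (∑ k ∈ Icc 1 T, (k : ℝ) ^ (-s)) ^ n := by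
  have hterm : ∀ a ∈ Fintype.piFinset fun _ : Fin n => Icc 1 T, ∏ i, (a i : ℝ) ≤ M →
      1 ≤ M ^ s * ∏ i, (a i : ℝ) ^ (-s) := by
    intro a ha hPM
    have hP : 1 ≤ ∏ i, (a i : ℝ) := Finset.one_le_prod fun i _ => by
      exact_mod_cast (mem_Icc.1 (Fintype.mem_piFinset.1 ha i)).1
    rw [finsetProd_rpow _ _ (fun i _ => Nat.cast_nonneg _), rpow_neg (by positivity),
      ← div_eq_mul_inv, ← div_rpow hM (by positivity)]
    exact one_le_rpow ((one_le_div (by linarith)).2 hPM) hs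
  calc (#{a ∈ Fintype.piFinset fun _ : Fin n => Icc 1 T | ∏ i, (a i : ℝ) ≤ M} : ℝ)
      = ∑ a ∈ Fintype.piFinset (fun _ : Fin n => Icc 1 T) with ∏ i, (a i : ℝ) ≤ M, 1 := by simp
    _ ≤ ∑ a ∈ Fintype.piFinset (fun _ : Fin n => Icc 1 T) with ∏ i, (a i : ℝ) ≤ M,
          M ^ s * ∏ i, (a i : ℝ) ^ (-s) :=
        sum_le_sum fun a ha => hterm a (mem_filter.1 ha).1 (mem_filter.1 ha).2
    _ ≤ ∑ a ∈ Fintype.piFinset fun _ : Fin n => Icc 1 T, M ^ s * ∏ i, (a i : ℝ) ^ (-s) :=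
        sum_le_sum_of_subset_of_nonneg (filter_subset _ _) fun a _ _ => by positivity
    _ = M ^ s * (∑ k ∈ Icc 1 T, (k : ℝ) ^ (-s)) ^ n := by
        rw [← mul_sum, sum_pow']

lemma card_filter_prod_le_le (n T : ℕ) (hn : 0 < n) {M : ℝ} (hM : 0 ≤ M) :
    (#{a ∈ Fintype.piFinset fun _ : Fin n => Icc 1 T | ∏ i, (a i : ℝ) ≤ M} : ℝ) ≤
      n ^ n * T * M ^ (1 - 1 / (n : ℝ)) := by
  have hn' : (0 : ℝ) < n := by exact_mod_cast hn
  have hp1 : 1 / (n : ℝ) ≤ 1 := by rw [div_le_one hn']; exact_mod_cast hn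
  have hsum : ∑ k ∈ Icc 1 T, (k : ℝ) ^ (-(1 - 1 / (n : ℝ))) ≤ n * (T : ℝ) ^ (1 / (n : ℝ)) := by
    have := mul_sum_Icc_rpow_sub_one_le (by positivity) hp1 T
    rw [neg_sub]
    rwa [one_div_mul_eq_div, div_le_iff₀ hn', mul_comm] at this
  have hsum_pow : (n * (T : ℝ) ^ (1 / (n : ℝ))) ^ n = n ^ n * T := by
    rw [mul_pow, ← rpow_natCast ((T : ℝ) ^ _), ← rpow_mul (Nat.cast_nonneg _),
      one_div_mul_cancel hn'.ne', rpow_one]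
  calc _ ≤ M ^ (1 - 1 / (n : ℝ)) * (∑ k ∈ Icc 1 T, (k : ℝ) ^ (-(1 - 1 / (n : ℝ)))) ^ n :=
        card_filter_prod_le_le_rpow_mul n T hM (by linarith)
    _ ≤ M ^ (1 - 1 / (n : ℝ)) * (n * (T : ℝ) ^ (1 / (n : ℝ))) ^ n := by gcongr
    _ = n ^ n * T * M ^ (1 - 1 / (n : ℝ)) := by rw [hsum_pow, mul_comm]

lemma card_piFinset_filter_dvd (n T d : ℕ) :
    #(Fintype.piFinset fun _ : Fin n => {x ∈ Icc 1 T | d ∣ x}) = (T / d) ^ n := by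
  rw [Fintype.card_piFinset, prod_const, card_univ, Fintype.card_fin,
    ← Nat.Ioc_filter_dvd_card_eq_div, ← Icc_add_one_left_eq_Ioc, zero_add]

lemma sum_Icc_two_inv_sq_le (T : ℕ) : ∑ d ∈ Icc 2 T, ((d : ℝ) ^ 2)⁻¹ ≤ 11 / 12 := by
  have hsplit : Icc 2 T ⊆ insert 2 (Ioo 2 (T + 1)) := by
    intro d hd
    simp only [mem_Icc, mem_insert, mem_Ioo] at hd ⊢
    omega
  calc ∑ d ∈ Icc 2 T, ((d : ℝ) ^ 2)⁻¹
      ≤ ∑ d ∈ insert 2 (Ioo 2 (T + 1)), ((d : ℝ) ^ 2)⁻¹ :=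
        sum_le_sum_of_subset_of_nonneg hsplit fun _ _ _ => by positivity
    _ = 1 / 4 + ∑ d ∈ Ioo 2 (T + 1), ((d : ℝ) ^ 2)⁻¹ := by
        rw [sum_insert (by simp)]; norm_num
    _ ≤ 1 / 4 + 2 / (2 + 1) := by gcongr; exact sum_Ioo_inv_sq_le 2 (T + 1)
    _ = 11 / 12 := by norm_num

lemma filter_gcd_ne_one_subset (n T : ℕ) (hn : 0 < n) :
    {a ∈ Fintype.piFinset fun _ : Fin n => Icc 1 T | univ.gcd a ≠ 1} ⊆
      (Icc 2 T).biUnion fun d => Fintype.piFinset fun _ => {x ∈ Icc 1 T | d ∣ x} := by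
  intro a ha
  simp only [mem_filter, Fintype.mem_piFinset, mem_Icc] at ha
  obtain ⟨hbox, hgcd⟩ := ha
  have hdvd : ∀ i, univ.gcd a ∣ a i := fun i => gcd_dvd (mem_univ i)
  have ha₀ := hbox ⟨0, hn⟩
  have hpos : 0 < univ.gcd a := Nat.pos_of_ne_zero fun h => by
    have := (gcd_eq_zero_iff.1 h) ⟨0, hn⟩ (mem_univ _)
    omega
  have hle : univ.gcd a ≤ T := (Nat.le_of_dvd (by omega) (hdvd ⟨0, hn⟩)).trans ha₀.2
  simp only [mem_biUnion, mem_Icc, Fintype.mem_piFinset, mem_filter]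
  exact ⟨univ.gcd a, ⟨by omega, hle⟩, fun i => ⟨hbox i, hdvd i⟩⟩

lemma card_GSet_ge (n T : ℕ) (hn : 2 ≤ n) : (T : ℝ) ^ n / 12 ≤ #(GSet n T) := by
  set box := Fintype.piFinset fun _ : Fin n => Icc 1 T
  have hsplit : (#(GSet n T) : ℝ) + #{a ∈ box | univ.gcd a ≠ 1} = (T : ℝ) ^ n := by
    exact_mod_cast (card_filter_add_card_filter_not _).trans (by simp [Fintype.card_piFinset])
  have hdivisible : ∀ d ∈ Icc 2 T, ((T / d : ℕ) : ℝ) ^ n ≤ (T : ℝ) ^ n * ((d : ℝ) ^ 2)⁻¹ := by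
    intro d hd
    have hd : (2 : ℝ) ≤ d := by exact_mod_cast (mem_Icc.1 hd).1
    calc ((T / d : ℕ) : ℝ) ^ n ≤ ((T : ℝ) / d) ^ n := by gcongr; exact Nat.cast_div_le
      _ = (T : ℝ) ^ n / (d : ℝ) ^ n := div_pow _ _ _
      _ ≤ (T : ℝ) ^ n / (d : ℝ) ^ 2 := by gcongr; linarith
      _ = (T : ℝ) ^ n * ((d : ℝ) ^ 2)⁻¹ := div_eq_mul_inv _ _
  have hnonprimitive : (#{a ∈ box | univ.gcd a ≠ 1} : ℝ) ≤ 11 / 12 * (T : ℝ) ^ n :=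
    calc (#{a ∈ box | univ.gcd a ≠ 1} : ℝ)
        ≤ ∑ d ∈ Icc 2 T, ((T / d : ℕ) : ℝ) ^ n := by
          have := (card_le_card (filter_gcd_ne_one_subset n T (by omega))).trans card_biUnion_le
          simp only [card_piFinset_filter_dvd] at this
          exact_mod_cast this
      _ ≤ ∑ d ∈ Icc 2 T, (T : ℝ) ^ n * ((d : ℝ) ^ 2)⁻¹ := sum_le_sum hdivisible
      _ ≤ (T : ℝ) ^ n * (11 / 12) := by rw [← mul_sum]; gcongr; exact sum_Icc_two_inv_sq_le T
      _ = 11 / 12 * (T : ℝ) ^ n := mul_comm _ _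
  linarith

lemma le_div_rpow_of_le_rpow_div_rpow {γ S P q : ℝ} (hγ : 0 < γ) (hS : 0 ≤ S) (hP : 0 < P)
    (hq : 0 < q) (h : γ ≤ S ^ (1 + 1 / q) / P ^ (1 / q)) : P ≤ S ^ (q + 1) / γ ^ q := by
  rw [le_div_iff₀ (rpow_pos_of_pos hP _)] at h
  have := rpow_le_rpow (by positivity) h hq.le
  rw [mul_rpow hγ.le (by positivity), ← rpow_mul hP.le, ← rpow_mul hS, one_div_mul_cancel hq.ne',
    rpow_one, add_mul, one_div_mul_cancel hq.ne', one_mul] at this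
  rwa [le_div_iff₀ (by positivity), mul_comm]

lemma filter_le_rpow_div_rpow_subset (n T : ℕ) (hn : 2 ≤ n) {γ : ℝ} (hγ : 0 < γ) :
    {a ∈ GSet n T | γ ≤ (∑ i, (a i : ℝ)) ^ (1 + 1 / ((n : ℝ) - 1)) /
        (∏ i, (a i : ℝ)) ^ (1 / ((n : ℝ) - 1))} ⊆
      {a ∈ Fintype.piFinset fun _ : Fin n => Icc 1 T |
        ∏ i, (a i : ℝ) ≤ (n * T : ℝ) ^ (n : ℝ) / γ ^ ((n : ℝ) - 1)} := by
  intro a ha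
  obtain ⟨haG, hγa⟩ := mem_filter.1 ha
  have hbox := (mem_filter.1 haG).1
  have hbounds : ∀ i, 1 ≤ (a i : ℝ) ∧ (a i : ℝ) ≤ T := fun i => by
    exact_mod_cast mem_Icc.1 (Fintype.mem_piFinset.1 hbox i)
  have hP : 0 < ∏ i, (a i : ℝ) := prod_pos fun i _ => by linarith [hbounds i]
  have hS : ∑ i, (a i : ℝ) ≤ n * T := by
    simpa using sum_le_sum fun i (_ : i ∈ univ) => (hbounds i).2
  have hq : (0 : ℝ) < n - 1 := by
    have : (2 : ℝ) ≤ n := by exact_mod_cast hn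
    linarith
  refine mem_filter.2 ⟨hbox, ?_⟩
  calc ∏ i, (a i : ℝ) ≤ (∑ i, (a i : ℝ)) ^ ((n : ℝ) - 1 + 1) / γ ^ ((n : ℝ) - 1) :=
        le_div_rpow_of_le_rpow_div_rpow hγ (by positivity) hP hq hγa
    _ ≤ (n * T : ℝ) ^ (n : ℝ) / γ ^ ((n : ℝ) - 1) := by
        rw [sub_add_cancel]
        gcongr

lemma div_rpow_rpow_one_sub_inv {x γ m : ℝ} (hx : 0 ≤ x) (hγ : 0 < γ) (hm : 0 < m) :
    (x ^ m / γ ^ (m - 1)) ^ (1 - 1 / m) = x ^ (m - 1) * γ ^ (-((m - 1) ^ 2 / m)) := by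
  rw [div_rpow (by positivity) (by positivity), ← rpow_mul hx, ← rpow_mul hγ.le, div_eq_mul_inv,
    ← rpow_neg hγ.le]
  congr 2 <;> field_simp

theorem stmt_13 (n : ℕ) (hn : 2 ≤ n) :
    ∃ c : ℝ, ∀ γ : ℝ, 0 < γ → ∀ T : ℕ, 0 < T →
      (((GSet n T).filter (fun a =>
          γ ≤ (∑ i, (a i : ℝ)) ^ (1 + 1 / ((n : ℝ) - 1)) /
                (∏ i, (a i : ℝ)) ^ (1 / ((n : ℝ) - 1)))).card : ℝ) /
        ((GSet n T).card : ℝ) ≤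
      c * γ ^ (-(((n : ℝ) - 1) ^ 2 / n)) := by
  refine ⟨12 * n ^ n * (n : ℝ) ^ ((n : ℝ) - 1), fun γ hγ T hT => ?_⟩
  have hn' : (0 : ℝ) < n := by positivity
  have hT' : (0 : ℝ) < T := by exact_mod_cast hT
  have hG := card_GSet_ge n T hn
  rw [div_le_iff₀ (lt_of_lt_of_le (by positivity) hG)]
  calc _ ≤ (#{a ∈ Fintype.piFinset fun _ : Fin n => Icc 1 T |
          ∏ i, (a i : ℝ) ≤ (n * T : ℝ) ^ (n : ℝ) / γ ^ ((n : ℝ) - 1)} : ℝ) := by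
        exact_mod_cast card_le_card (filter_le_rpow_div_rpow_subset n T hn hγ)
    _ ≤ n ^ n * T * ((n * T : ℝ) ^ (n : ℝ) / γ ^ ((n : ℝ) - 1)) ^ (1 - 1 / (n : ℝ)) :=
        card_filter_prod_le_le n T (by omega) (by positivity)
    _ = 12 * n ^ n * (n : ℝ) ^ ((n : ℝ) - 1) * γ ^ (-(((n : ℝ) - 1) ^ 2 / n)) *
          ((T : ℝ) ^ n / 12) := by
        rw [div_rpow_rpow_one_sub_inv (by positivity) hγ hn', mul_rpow hn'.le hT'.le,
          rpow_sub_one hT'.ne', rpow_natCast]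
        field_simp
    _ ≤ _ := by gcongr
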